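/- Consider interpolating least-squares regression: x_1,…,x_n ∈ ℝ^d with ‖x_i‖² ≤ L, labels y_i = x_iᵀw*, covariance eigenvalue bound (1/n)Σ_i⟨x_i, v⟩² ≥ μ‖v‖² for all v (μ ≥ 0), step size 0 < α ≤ 1/L, and a rounding function Q : ℝ → ℝ with |Q(u) − u| ≤ ε|u| for all u (ε > 0), applied componentwise to vectors. For an index sequence σ ∈ {1,…,n}^T and initial point w_0 ∈ ℝ^d, define SGD with nearest rounding only in the forward and backward compute and exact weight-update arithmetic: w_{t+1}^σ = w_t^σ − α·Q( Q(x_{σ(t)}ᵀ w_t^σ − y_{σ(t)})·x_{σ(t)} ). Then the uniform average over all index sequences satisfies (1/n^T)·Σ_{σ ∈ {1,…,n}^T} ‖w_T^σ − w*‖² ≤ (1 − αμ + 2αε(2+ε)L + α²ε²(2+ε)²L²)^T · ‖w_0 − w*‖². (Rigorous form of Theorem 2, which disregards ε² terms to get the factor (1 − αμ + 4αεL).) -/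

import Mathlib

/-!
Write `e_t = w_t - w*`. Since the labels interpolate, the forward residual is `⟪x_i, e_t⟫`, so a
rounded step is the exact SGD step `e - α ⟪x_i, e⟫ x_i` perturbed by `α δ` with
`‖δ‖ ≤ ε(2+ε) |⟪x_i, e⟫| ‖x_i‖ ≤ ε(2+ε) L ‖e‖`. For `αL ≤ 1` the exact step satisfies
`‖·‖² ≤ ‖e‖² - α⟪x_i, e⟫²`, so the rounded one satisfies
`‖·‖² ≤ (1 + αε(2+ε)L)² ‖e‖² - α⟪x_i, e⟫²`. The iterate `w_t` does not depend on the fresh index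
`σ t`; averaging over it turns `α⟪x_i, e⟫²` into at least `αμ‖e‖²`, which gives the contraction
factor `(1 + αε(2+ε)L)² - αμ` per step.
-/

open scoped RealInnerProductSpace BigOperators

open Finset Function

namespace Fintype

variable {ι α : Type*} [Fintype ι] [DecidableEq ι] [Fintype α]

theorem sum_sum_update {M : Type*} [AddCommMonoid M] (t : ι) (f : (ι → α) → M) :
    ∑ σ, ∑ a, f (update σ t a) = Fintype.card α • ∑ σ, f σ := by
  let e := Equiv.funSplitAt t α
  have hupdate : ∀ σ a, update σ t a = e.symm (a, (e σ).2) := by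
    intro σ a; ext j
    by_cases hj : j = t
    · subst hj; simp [e, Equiv.funSplitAt_symm_apply]
    · simp [e, Equiv.funSplitAt_symm_apply, hj]
  simp_rw [hupdate]
  rw [← e.symm.sum_comp (fun σ => ∑ a, f (e.symm (a, (e σ).2))), ← e.symm.sum_comp f]
  simp only [Equiv.apply_symm_apply, Fintype.sum_prod_type, sum_const, card_univ]
  rw [Finset.sum_comm]

theorem sum_le_mul_sum_of_sum_update_le (t : ι) {f g : (ι → α) → ℝ} {ρ : ℝ}
    (h : ∀ σ, ∑ a, f (update σ t a) ≤ ρ * ∑ a, g (update σ t a)) :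
    ∑ σ, f σ ≤ ρ * ∑ σ, g σ := by
  rcases isEmpty_or_nonempty α with hα | hα
  · have : IsEmpty (ι → α) := ⟨fun σ => isEmptyElim (σ t)⟩
    simp
  have hsum := Finset.sum_le_sum fun σ (_ : σ ∈ univ) => h σ
  rw [← mul_sum, sum_sum_update, sum_sum_update, nsmul_eq_mul, nsmul_eq_mul,
    mul_left_comm] at hsum
  exact le_of_mul_le_mul_left hsum (by exact_mod_cast Fintype.card_pos)

end Fintype

-- No sign condition on `ρ` is needed: if `ρ < 0`, then `S 1 ≤ ρ * S 0` forces `S 0 = 0`.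
theorem le_pow_mul_of_le_mul {S : ℕ → ℝ} {ρ : ℝ} {T : ℕ} (hS : ∀ t, 0 ≤ S t)
    (h : ∀ t < T, S (t + 1) ≤ ρ * S t) : S T ≤ ρ ^ T * S 0 := by
  by_cases hρ : 0 ≤ ρ
  · induction T with
    | zero => simp
    | succ T ih =>
      calc S (T + 1) ≤ ρ * S T := h T T.lt_succ_self
        _ ≤ ρ * (ρ ^ T * S 0) := by gcongr; exact ih fun t ht => h t (by omega)
        _ = ρ ^ (T + 1) * S 0 := by ring
  · cases T with
    | zero => simp
    | succ T =>
      have h0 : S 0 = 0 := by nlinarith [h 0 (by omega), hS 0, hS 1]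
      rw [h0, mul_zero]
      nlinarith [h T T.lt_succ_self, hS T]

theorem trajectory_update_of_le {α β : Type*} {T : ℕ} (F : α → β → β) (w₀ : β)
    (w : (Fin T → α) → ℕ → β) (hw₀ : ∀ σ, w σ 0 = w₀)
    (hw : ∀ σ (t : Fin T), w σ (t + 1) = F (σ t) (w σ t))
    (σ : Fin T → α) (s : Fin T) (a : α) : ∀ t ≤ (s : ℕ), w (update σ s a) t = w σ t
  | 0, _ => by rw [hw₀, hw₀]
  | t + 1, hts => by
    have ht : t < T := by omega
    have hne : (⟨t, ht⟩ : Fin T) ≠ s := fun h => by rw [← h] at hts; simp at hts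
    rw [hw _ ⟨t, ht⟩, hw σ ⟨t, ht⟩, update_of_ne hne,
      trajectory_update_of_le F w₀ w hw₀ hw σ s a t (by omega)]

theorem EuclideanSpace.norm_le_mul_norm_of_abs_le {ι : Type*} [Fintype ι]
    {u v : EuclideanSpace ℝ ι} {c : ℝ} (hc : 0 ≤ c) (h : ∀ j, |u j| ≤ c * |v j|) :
    ‖u‖ ≤ c * ‖v‖ := by
  rw [EuclideanSpace.norm_eq, EuclideanSpace.norm_eq, ← Real.sqrt_sq hc,
    ← Real.sqrt_mul (sq_nonneg c), mul_sum]
  gcongr with j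
  rw [Real.norm_eq_abs, Real.norm_eq_abs, ← mul_pow]
  exact pow_le_pow_left₀ (abs_nonneg _) (h j) 2

section Rounding

variable {ε : ℝ} {Q : ℝ → ℝ}

theorem abs_round_le (hQ : ∀ u, |Q u - u| ≤ ε * |u|) (u : ℝ) : |Q u| ≤ (1 + ε) * |u| := by
  have := abs_sub_abs_le_abs_sub (Q u) u
  linarith [hQ u]

theorem abs_round_round_mul_sub_le (hε : 0 ≤ ε) (hQ : ∀ u, |Q u - u| ≤ ε * |u|) (r a : ℝ) :
    |Q (Q r * a) - r * a| ≤ ε * (2 + ε) * (|r| * |a|) := by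
  have hround := mul_le_mul_of_nonneg_left
    (mul_le_mul_of_nonneg_right (abs_round_le hQ r) (abs_nonneg a)) hε
  have hres := mul_le_mul_of_nonneg_right (hQ r) (abs_nonneg a)
  calc |Q (Q r * a) - r * a| ≤ |Q (Q r * a) - Q r * a| + |Q r - r| * |a| := by
        rw [← abs_mul, sub_mul]; exact abs_sub_le _ _ _
    _ ≤ ε * (|Q r| * |a|) + ε * |r| * |a| := by
        gcongr
        · rw [← abs_mul]; exact hQ _
    _ ≤ ε * (2 + ε) * (|r| * |a|) := by nlinarith

-- The forward pass rounds the residual `r`, the backward pass the gradient `r • v` componentwise.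
def roundedGrad {ι : Type*} (Q : ℝ → ℝ) (r : ℝ) (v : EuclideanSpace ℝ ι) : EuclideanSpace ℝ ι :=
  WithLp.toLp 2 (fun j => Q ((Q r • v) j))

theorem norm_roundedGrad_sub_smul_le {ι : Type*} [Fintype ι] (hε : 0 ≤ ε)
    (hQ : ∀ u, |Q u - u| ≤ ε * |u|) (r : ℝ) (v : EuclideanSpace ℝ ι) :
    ‖roundedGrad Q r v - r • v‖ ≤ ε * (2 + ε) * (|r| * ‖v‖) := by
  rw [← mul_assoc]
  refine EuclideanSpace.norm_le_mul_norm_of_abs_le (by positivity) fun j => ?_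
  rw [mul_assoc, ← abs_mul]
  simpa [roundedGrad] using abs_round_round_mul_sub_le hε hQ r (v j)

end Rounding

section Step

variable {E : Type*} [NormedAddCommGroup E] [InnerProductSpace ℝ E] {α L : ℝ} {v e : E}

theorem norm_sub_smul_inner_sq_le (hα : 0 ≤ α) (hv : ‖v‖ ^ 2 ≤ L) (hαL : α * L ≤ 1) :
    ‖e - (α * ⟪v, e⟫) • v‖ ^ 2 ≤ ‖e‖ ^ 2 - α * ⟪v, e⟫ ^ 2 := by
  have hαv : α * ‖v‖ ^ 2 ≤ 1 := by nlinarith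
  rw [norm_sub_sq_real, real_inner_smul_right, real_inner_comm, norm_smul, Real.norm_eq_abs,
    mul_pow, sq_abs]
  nlinarith [mul_le_mul_of_nonneg_left hαv (mul_nonneg hα (sq_nonneg ⟪e, v⟫))]

theorem norm_sub_smul_sq_le {β : ℝ} {g : E} (hα : 0 ≤ α) (hβ : 0 ≤ β) (hv : ‖v‖ ^ 2 ≤ L)
    (hαL : α * L ≤ 1) (hg : ‖g - ⟪v, e⟫ • v‖ ≤ β * (|⟪v, e⟫| * ‖v‖)) :
    ‖e - α • g‖ ^ 2 ≤ (1 + α * β * L) ^ 2 * ‖e‖ ^ 2 - α * ⟪v, e⟫ ^ 2 := by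
  set a := e - (α * ⟪v, e⟫) • v
  set δ := α • (g - ⟪v, e⟫ • v)
  have hsplit : e - α • g = a - δ := by
    simp only [a, δ, smul_sub, mul_smul]; abel
  have ha : ‖a‖ ^ 2 ≤ ‖e‖ ^ 2 - α * ⟪v, e⟫ ^ 2 := norm_sub_smul_inner_sq_le hα hv hαL
  have ha' : ‖a‖ ≤ ‖e‖ := by
    refine (pow_le_pow_iff_left₀ (norm_nonneg a) (norm_nonneg e) two_ne_zero).mp ?_
    nlinarith [mul_nonneg hα (sq_nonneg ⟪v, e⟫)]
  have hδ : ‖δ‖ ≤ α * β * L * ‖e‖ := by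
    have hcs : |⟪v, e⟫| * ‖v‖ ≤ L * ‖e‖ := by
      calc |⟪v, e⟫| * ‖v‖ ≤ ‖v‖ * ‖e‖ * ‖v‖ := by gcongr; exact abs_real_inner_le_norm v e
        _ = ‖v‖ ^ 2 * ‖e‖ := by ring
        _ ≤ L * ‖e‖ := by gcongr
    calc ‖δ‖ = α * ‖g - ⟪v, e⟫ • v‖ := by rw [norm_smul, Real.norm_of_nonneg hα]
      _ ≤ α * (β * (L * ‖e‖)) := by gcongr; exact hg.trans (by gcongr)
      _ = α * β * L * ‖e‖ := by ring
  calc ‖e - α • g‖ ^ 2 ≤ (‖a‖ + ‖δ‖) ^ 2 := by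
        rw [hsplit]; gcongr; exact norm_sub_le a δ
    _ = ‖a‖ ^ 2 + 2 * ‖a‖ * ‖δ‖ + ‖δ‖ ^ 2 := by ring
    _ ≤ (‖e‖ ^ 2 - α * ⟪v, e⟫ ^ 2) + 2 * ‖e‖ * (α * β * L * ‖e‖) + (α * β * L * ‖e‖) ^ 2 := by
        gcongr
    _ = (1 + α * β * L) ^ 2 * ‖e‖ ^ 2 - α * ⟪v, e⟫ ^ 2 := by ring

theorem sum_norm_sub_smul_sq_le {ι : Type*} [Fintype ι] {β μ : ℝ} {x g : ι → E} (hα : 0 ≤ α)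
    (hβ : 0 ≤ β) (hx : ∀ i, ‖x i‖ ^ 2 ≤ L) (hαL : α * L ≤ 1)
    (hg : ∀ i, ‖g i - ⟪x i, e⟫ • x i‖ ≤ β * (|⟪x i, e⟫| * ‖x i‖))
    (hμ : μ * ‖e‖ ^ 2 ≤ (1 / (Fintype.card ι : ℝ)) * ∑ i, ⟪x i, e⟫ ^ 2) :
    ∑ i, ‖e - α • g i‖ ^ 2 ≤ ((1 + α * β * L) ^ 2 - α * μ) * (Fintype.card ι * ‖e‖ ^ 2) := by
  rcases isEmpty_or_nonempty ι with hι | hι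
  · simp
  have hcard : (0 : ℝ) < Fintype.card ι := by exact_mod_cast Fintype.card_pos
  rw [one_div_mul_eq_div, le_div_iff₀ hcard] at hμ
  calc ∑ i, ‖e - α • g i‖ ^ 2 ≤ ∑ i, ((1 + α * β * L) ^ 2 * ‖e‖ ^ 2 - α * ⟪x i, e⟫ ^ 2) :=
        sum_le_sum fun i _ => norm_sub_smul_sq_le hα hβ (hx i) hαL (hg i)
    _ = Fintype.card ι * ((1 + α * β * L) ^ 2 * ‖e‖ ^ 2) - α * ∑ i, ⟪x i, e⟫ ^ 2 := by
        rw [sum_sub_distrib, sum_const, card_univ, nsmul_eq_mul, mul_sum]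
    _ ≤ Fintype.card ι * ((1 + α * β * L) ^ 2 * ‖e‖ ^ 2) -
          α * (μ * ‖e‖ ^ 2 * Fintype.card ι) := by
        gcongr
    _ = ((1 + α * β * L) ^ 2 - α * μ) * (Fintype.card ι * ‖e‖ ^ 2) := by ring

theorem sum_norm_sq_le_of_inexact_sgd {ι : Type*} [Fintype ι] {T : ℕ} {β μ : ℝ} {x : ι → E}
    {g : ι → E → E} (hα : 0 ≤ α) (hβ : 0 ≤ β) (hx : ∀ i, ‖x i‖ ^ 2 ≤ L) (hαL : α * L ≤ 1)
    (hg : ∀ i e, ‖g i e - ⟪x i, e⟫ • x i‖ ≤ β * (|⟪x i, e⟫| * ‖x i‖))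
    (hμ : ∀ e, μ * ‖e‖ ^ 2 ≤ (1 / (Fintype.card ι : ℝ)) * ∑ i, ⟪x i, e⟫ ^ 2)
    (e₀ : E) (e : (Fin T → ι) → ℕ → E) (he₀ : ∀ σ, e σ 0 = e₀)
    (he : ∀ σ (t : Fin T), e σ (t + 1) = e σ t - α • g (σ t) (e σ t)) :
    ∑ σ, ‖e σ T‖ ^ 2 ≤
      ((1 + α * β * L) ^ 2 - α * μ) ^ T * (Fintype.card ι ^ T * ‖e₀‖ ^ 2) := by
  have hfiber := trajectory_update_of_le (fun i e => e - α • g i e) e₀ e he₀ he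
  have hstep (t : Fin T) : ∑ σ, ‖e σ (t + 1)‖ ^ 2 ≤
      ((1 + α * β * L) ^ 2 - α * μ) * ∑ σ, ‖e σ t‖ ^ 2 := by
    refine Fintype.sum_le_mul_sum_of_sum_update_le t fun σ => ?_
    simp only [he, update_self, hfiber σ t _ t le_rfl, sum_const, card_univ, nsmul_eq_mul]
    exact sum_norm_sub_smul_sq_le hα hβ hx hαL (fun i => hg i _) (hμ _)
  have hS := le_pow_mul_of_le_mul (S := fun t => ∑ σ, ‖e σ t‖ ^ 2)
    (fun t => by positivity) fun t ht => hstep ⟨t, ht⟩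
  simpa [he₀] using hS

end Step

theorem rounded_forward_backward_sgd_convergence_general
    {d n : ℕ} (T : ℕ) (ε α L μ : ℝ) (hε : 0 < ε) (hL : 0 < L)
    (hα : 0 < α) (hαL : α ≤ 1 / L)
    (x : Fin n → EuclideanSpace ℝ (Fin d))
    (hx : ∀ i, ‖x i‖ ^ 2 ≤ L)
    (wstar : EuclideanSpace ℝ (Fin d))
    (y : Fin n → ℝ) (hy : ∀ i, y i = ⟪x i, wstar⟫)
    (heig : ∀ v : EuclideanSpace ℝ (Fin d),
      μ * ‖v‖ ^ 2 ≤ (1 / (n : ℝ)) * ∑ i : Fin n, ⟪x i, v⟫ ^ 2)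
    (Q : ℝ → ℝ) (hQ : ∀ u : ℝ, |Q u - u| ≤ ε * |u|)
    (w0 : EuclideanSpace ℝ (Fin d))
    (w : (Fin T → Fin n) → ℕ → EuclideanSpace ℝ (Fin d))
    (hw0 : ∀ σ, w σ 0 = w0)
    (hiter : ∀ (σ : Fin T → Fin n) (t : Fin T),
      w σ ((t : ℕ) + 1) =
        w σ (t : ℕ) -
          α • (show EuclideanSpace ℝ (Fin d) from
            WithLp.toLp 2 (fun j => Q ((Q (⟪x (σ t), w σ (t : ℕ)⟫ - y (σ t)) • x (σ t)) j)))) :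
    (1 / (n : ℝ) ^ T) * ∑ σ : Fin T → Fin n, ‖w σ T - wstar‖ ^ 2 ≤
      (1 - α * μ + 2 * α * ε * (2 + ε) * L + α ^ 2 * ε ^ 2 * (2 + ε) ^ 2 * L ^ 2) ^ T *
        ‖w0 - wstar‖ ^ 2 := by
  set ρ := (1 + α * (ε * (2 + ε)) * L) ^ 2 - α * μ
  have hρ : 1 - α * μ + 2 * α * ε * (2 + ε) * L + α ^ 2 * ε ^ 2 * (2 + ε) ^ 2 * L ^ 2 = ρ := by
    ring
  have hS := sum_norm_sq_le_of_inexact_sgd hα.le (by positivity) hx ((le_div_iff₀ hL).mp hαL)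
    (fun i e => norm_roundedGrad_sub_smul_le hε.le hQ ⟪x i, e⟫ (x i)) (by simpa using heig)
    (w0 - wstar) (fun σ t => w σ t - wstar) (fun σ => by rw [hw0]) fun σ t => by
      rw [hiter, hy, ← inner_sub_right, sub_right_comm]
      rfl
  rw [hρ]
  -- Without samples `1 / 0 ^ T = 0` for `T > 0`, and `heig` forces `μ ≤ 0` unless `w0 = wstar`.
  rcases eq_or_ne n 0 with rfl | hn
  · rcases T.eq_zero_or_pos with rfl | hT
    · simpa using hS
    have : IsEmpty (Fin T → Fin 0) := ⟨fun σ => (σ ⟨0, hT⟩).elim0⟩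
    simp only [univ_eq_empty, sum_empty, mul_zero]
    rcases (sq_nonneg ‖w0 - wstar‖).eq_or_lt with hD | hD
    · rw [← hD, mul_zero]
    have hμD : μ * ‖w0 - wstar‖ ^ 2 ≤ 0 := by simpa using heig (w0 - wstar)
    have hμ : μ ≤ 0 := by nlinarith
    have hρ0 : 0 ≤ ρ := by nlinarith [sq_nonneg (1 + α * (ε * (2 + ε)) * L)]
    positivity
  · rw [one_div_mul_eq_div, div_le_iff₀ (by positivity)]
    simp only [Fintype.card_fin] at hS
    linarith

/-- Rigorous form of Theorem 2: SGD on interpolating least squares with nearest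
rounding only in the forward and backward compute (exact weight updates) converges
linearly in expectation over the random index sequence. -/
theorem rounded_forward_backward_sgd_convergence
    {d n : ℕ} (T : ℕ) (ε α L μ : ℝ) (hε : 0 < ε) (hL : 0 < L)
    (hα : 0 < α) (hαL : α ≤ 1 / L) (hμ : 0 ≤ μ)
    (x : Fin n → EuclideanSpace ℝ (Fin d))
    (hx : ∀ i, ‖x i‖ ^ 2 ≤ L)
    (wstar : EuclideanSpace ℝ (Fin d))
    (y : Fin n → ℝ) (hy : ∀ i, y i = ⟪x i, wstar⟫)
    (heig : ∀ v : EuclideanSpace ℝ (Fin d),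
      μ * ‖v‖ ^ 2 ≤ (1 / (n : ℝ)) * ∑ i : Fin n, ⟪x i, v⟫ ^ 2)
    (Q : ℝ → ℝ) (hQ : ∀ u : ℝ, |Q u - u| ≤ ε * |u|)
    (w0 : EuclideanSpace ℝ (Fin d))
    (w : (Fin T → Fin n) → ℕ → EuclideanSpace ℝ (Fin d))
    (hw0 : ∀ σ, w σ 0 = w0)
    (hiter : ∀ (σ : Fin T → Fin n) (t : Fin T),
      w σ ((t : ℕ) + 1) =
        w σ (t : ℕ) -
          α • (show EuclideanSpace ℝ (Fin d) from
            WithLp.toLp 2 (fun j => Q ((Q (⟪x (σ t), w σ (t : ℕ)⟫ - y (σ t)) • x (σ t)) j)))) :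
    (1 / (n : ℝ) ^ T) * ∑ σ : Fin T → Fin n, ‖w σ T - wstar‖ ^ 2 ≤
      (1 - α * μ + 2 * α * ε * (2 + ε) * L + α ^ 2 * ε ^ 2 * (2 + ε) ^ 2 * L ^ 2) ^ T *
        ‖w0 - wstar‖ ^ 2 :=
  rounded_forward_backward_sgd_convergence_general T ε α L μ hε hL hα hαL x hx wstar y hy heig Q hQ
    w0 w hw0 hiter
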